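/- Along the synchronized trajectory q = q_r, ṡ = 1, σ = s, the control law τ = -μ τ_{q̇}/√⟨τ_{q̇},q̇⟩ + τ_r⁰ with μ = (1/√M_r(s)) ∂W_r/∂σ = -⟨τ_r, q̇_r⟩/√M_r(s) reduces exactly to τ = τ_r, the reference input. -/
import Mathlib


open Matrix

/-- Along the synchronized trajectory (`q = q_r`, `ṡ = 1`,
`σ = s`), where `⟨τ_{q̇},q̇⟩ = M_r(s)`, `τ_{q̇} = (M_r/⟨q̇,τ_r⟩)(τ_r - τ_r⁰)`
and `μ = -⟨τ_r, q̇_r⟩/√M_r` (from `dW_r/ds = -⟨τ_r,q̇_r⟩`), the control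
`τ = -μ τ_{q̇}/√⟨τ_{q̇},q̇⟩ + τ_r⁰` reduces exactly to the reference input
`τ = τ_r`. -/
theorem control_reduces_to_reference_input {n : ℕ}
    (qd τr τqd τr0 : Fin n → ℝ) (Mr μ : ℝ)
    (hMr : 0 < Mr)
    (hpair : τqd ⬝ᵥ qd = Mr)
    (hne : qd ⬝ᵥ τr ≠ 0)
    (hτqd : τqd = (Mr / (qd ⬝ᵥ τr)) • (τr - τr0))
    (hμ : μ = -(qd ⬝ᵥ τr) / Real.sqrt Mr) :
    -((μ * (Real.sqrt (τqd ⬝ᵥ qd))⁻¹) • τqd) + τr0 = τr := by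
  have hsq : Real.sqrt Mr ≠ 0 := by positivity
  have hmul : Real.sqrt Mr * Real.sqrt Mr = Mr := Real.mul_self_sqrt hMr.le
  rw [hpair, hμ, hτqd, smul_smul, ← neg_smul]
  have hc : -(-(qd ⬝ᵥ τr) / Real.sqrt Mr * (Real.sqrt Mr)⁻¹ * (Mr / (qd ⬝ᵥ τr))) = 1 := by
    field_simp
    linarith [hmul]
  rw [hc, one_smul, sub_add_cancel]
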